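/- Let R be an associative unital ℂ-algebra with a derivation D (write r' := D r), let x ∈ R be central with x' = 1, and let f, g, a, b ∈ R with a' = b' = 0 and ba − ab = 2b, and suppose f' = −f² + g − (1/2)x − b and g' = 3fg − gf + 2bf − 2fb + a (the system P₂²). Define the 2×2 matrices over the Laurent polynomial ring R[μ, μ⁻¹]: A(μ) = [[0,2],[0,0]]μ + [[−2f, 2f²−g+x+(2/3)b],[−2, 2f]] + [[(2/3)bf+(1/2)a, (1/3)bg−(2/3)bf²−(1/3)xb−(4/9)b²],[−g+(2/3)b, −(fg−gf)−(4/3)bf+(2/3)fb−(1/2)a]]μ⁻¹ and B(μ) = [[0,1],[0,0]]μ + [[0, −(1/3)b],[−1, 2f]]. Then the zero-curvature equation ∂ₓA − ∂_μB + AB − BA = 0 holds identically in μ. (The Harnad–Tracy–Widom pair HTW₂² is an isomonodromic Lax pair for the non-abelian system P₂².) -/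
import Mathlib


/- STATEMENT 12: The Harnad–Tracy–Widom pair HTW₂² is an isomonodromic Lax pair for
the non-abelian system P₂²: if ba − ab = 2b, f' = −f² + g − (1/2)x − b and
g' = 3fg − gf + 2bf − 2fb + a, then the zero-curvature equation
∂ₓA − ∂_μB + AB − BA = 0 holds identically in μ. -/

noncomputable section

variable (R : Type*) [Ring R] [Algebra ℂ R]

/-- The μ-dependent matrix `A(μ)` of the Harnad–Tracy–Widom pair HTW₂². -/
def HTW22Amat (f g a b x : R) (μ : ℂ) : Matrix (Fin 2) (Fin 2) R :=
  μ • !![(0 : R), 2; 0, 0]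
    + !![-2 * f, 2 * f ^ 2 - g + x + (2 / 3 : ℂ) • b; -2, 2 * f]
    + μ⁻¹ • !![(2 / 3 : ℂ) • (b * f) + (1 / 2 : ℂ) • a,
               (1 / 3 : ℂ) • (b * g) - (2 / 3 : ℂ) • (b * f ^ 2)
                 - (1 / 3 : ℂ) • (x * b) - (4 / 9 : ℂ) • (b ^ 2);
               -g + (2 / 3 : ℂ) • b,
               -(f * g - g * f) - (4 / 3 : ℂ) • (b * f) + (2 / 3 : ℂ) • (f * b)
                 - (1 / 2 : ℂ) • a]

/-- The μ-dependent matrix `B(μ)` of the Harnad–Tracy–Widom pair HTW₂². -/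
def HTW22Bmat (f b : R) (μ : ℂ) : Matrix (Fin 2) (Fin 2) R :=
  μ • !![(0 : R), 1; 0, 0] + !![0, -((1 / 3 : ℂ) • b); -1, 2 * f]

set_option maxHeartbeats 1600000 in
theorem HTW22_zero_curvature_of_P22
    (D : R →ₗ[ℂ] R) (hD : ∀ a b : R, D (a * b) = D a * b + a * D b)
    (x : R) (hx : ∀ r : R, x * r = r * x) (hx1 : D x = 1)
    (f g a b : R) (ha : D a = 0) (hb : D b = 0)
    (hba : b * a - a * b = 2 * b)
    (hf' : D f = -f ^ 2 + g - (1 / 2 : ℂ) • x - b)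
    (hg' : D g = 3 * (f * g) - g * f + 2 * (b * f) - 2 * (f * b) + a) :
    ∀ μ : ℂ, μ ≠ 0 →
      (HTW22Amat R f g a b x μ).map ⇑D - !![(0 : R), 1; 0, 0]
        + HTW22Amat R f g a b x μ * HTW22Bmat R f b μ
        - HTW22Bmat R f b μ * HTW22Amat R f g a b x μ = 0 := by
  intro μ hμ
  have e2 : ∀ r : R, (2 : R) * r = (2 : ℂ) • r := fun r => by
    rw [show ((2 : R)) = ((2 : ℂ) • (1 : R)) by rw [Algebra.smul_def, mul_one, map_ofNat],
      smul_mul_assoc, one_mul]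
  have e2' : ∀ r : R, r * (2 : R) = (2 : ℂ) • r := fun r => by
    rw [show ((2 : R)) = ((2 : ℂ) • (1 : R)) by rw [Algebra.smul_def, mul_one, map_ofNat],
      mul_smul_comm, mul_one]
  have e3 : ∀ r : R, (3 : R) * r = (3 : ℂ) • r := fun r => by
    rw [show ((3 : R)) = ((3 : ℂ) • (1 : R)) by rw [Algebra.smul_def, mul_one, map_ofNat],
      smul_mul_assoc, one_mul]
  have h2 : (2 : R) = (2 : ℂ) • (1 : R) := by rw [Algebra.smul_def, mul_one, map_ofNat]
  have h3 : (3 : R) = (3 : ℂ) • (1 : R) := by rw [Algebra.smul_def, mul_one, map_ofNat]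
  have hD1 : D 1 = 0 := by
    have := hD 1 1; simp at this; exact this
  have hD2 : D 2 = 0 := by
    rw [show ((2:R)) = 1 + 1 by norm_num, map_add, hD1]; simp
  have hba' : b * a = (2 : ℂ) • b + a * b := by
    rw [← e2, ← hba]; noncomm_ring
  have hba2 : ∀ w : R, b * (a * w) = (2 : ℂ) • (b * w) + a * (b * w) := fun w => by
    rw [← mul_assoc, hba', add_mul, smul_mul_assoc, mul_assoc]
  ext i j
  fin_cases i <;> fin_cases j <;>
    · simp only [HTW22Amat, HTW22Bmat, Matrix.map_apply, Matrix.add_apply, Matrix.sub_apply,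
        Matrix.smul_apply, Matrix.mul_apply, Fin.sum_univ_two, Matrix.zero_apply,
        Matrix.cons_val', Matrix.cons_val_zero, Matrix.cons_val_one, Matrix.head_cons,
        Matrix.head_fin_const, Matrix.of_apply, Matrix.empty_val', Matrix.cons_val_fin_one,
        Fin.mk_zero, Fin.mk_one]
      try simp only [pow_two, map_add, map_sub, map_neg, map_smul, hD, hf', hg', ha, hb, hx1,
        hD1, hD2]
      simp only [mul_add, add_mul, mul_sub, sub_mul, neg_mul, mul_neg, neg_neg, neg_add,
        smul_mul_assoc, mul_smul_comm, smul_smul, smul_add, smul_sub, smul_neg,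
        mul_assoc, e2, e2', e3, zero_mul, mul_zero, zero_add, add_zero, mul_one, one_mul,
        hx, hba', hba2, map_zero, smul_zero]
      try simp only [h2, h3, smul_smul, smul_mul_assoc, mul_smul_comm, one_mul, mul_one,
        map_zero, smul_zero]
      match_scalars <;> field_simp <;> try ring1
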